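/- Let γ > 0 and a1, a2, a3 ∈ ℝ. The 4×4 complex matrix L = γ( a1 · σ1⊗σ1 + a2 · σ2ᵀ⊗σ2 + a3 · σ3⊗σ3 − (a1+a2+a3) · I₄ ) has characteristic polynomial X · (X + 2γ(a1+a2)) · (X + 2γ(a1+a3)) · (X + 2γ(a2+a3)); equivalently, its multiset of eigenvalues is {0, −2γ(a1+a2), −2γ(a1+a3), −2γ(a2+a3)}. -/

import Mathlib

open Matrix Complex Kronecker Polynomial

noncomputable section

/-- The Pauli matrices. -/
def pauli1 : Matrix (Fin 2) (Fin 2) ℂ := !![0, 1; 1, 0]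
def pauli2 : Matrix (Fin 2) (Fin 2) ℂ := !![0, -I; I, 0]
def pauli3 : Matrix (Fin 2) (Fin 2) ℂ := !![1, 0; 0, -1]

/-- The generator of evolution
`L = γ( a1 σ1⊗σ1 + a2 σ2ᵀ⊗σ2 + a3 σ3⊗σ3 − (a1+a2+a3) I₄ )`. -/
def gen2 (γ a1 a2 a3 : ℝ) : Matrix (Fin 2 × Fin 2) (Fin 2 × Fin 2) ℂ :=
  (γ : ℂ) • ((a1 : ℂ) • (pauli1 ⊗ₖ pauli1) + (a2 : ℂ) • (pauli2ᵀ ⊗ₖ pauli2)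
    + (a3 : ℂ) • (pauli3 ⊗ₖ pauli3)
    - ((a1 + a2 + a3 : ℝ) : ℂ) • (1 : Matrix (Fin 2 × Fin 2) (Fin 2 × Fin 2) ℂ))

/-! Every Pauli term of `gen2` commutes with `σ3 ⊗ σ3`, so the generator preserves the parity
sectors `{|00⟩, |11⟩}` and `{|01⟩, |10⟩}`. On each sector it is a symmetric `2 × 2` matrix
`!![p, q; q, p]`, whose eigenvalues are `p ± q`. -/

lemma Matrix.charpoly_of_fin_two_symm {R : Type*} [CommRing R] [Nontrivial R] (p q : R) :
    (!![p, q; q, p]).charpoly = (X - C (p + q)) * (X - C (p - q)) := by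
  rw [charpoly_fin_two, trace_fin_two_of, det_fin_two_of]
  simp only [map_add, map_sub, map_mul]
  ring

lemma Polynomial.roots_X_mul_X_add_C_mul_X_add_C_mul_X_add_C {R : Type*} [CommRing R]
    [IsDomain R] (a b c : R) :
    (X * (X + C a) * (X + C b) * (X + C c)).roots = {0, -a, -b, -c} := by
  have hprod : X * (X + C a) * (X + C b) * (X + C c)
      = (({0, -a, -b, -c} : Multiset R).map fun r => X - C r).prod := by
    simp only [Multiset.insert_eq_cons, Multiset.map_cons, Multiset.prod_cons,
      Multiset.map_singleton, Multiset.prod_singleton, map_neg, map_zero]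
    ring
  rw [hprod, roots_multiset_prod_X_sub_C]

def parityEquiv : Fin 2 ⊕ Fin 2 ≃ Fin 2 × Fin 2 where
  toFun := Sum.elim (fun i => (i, i)) (fun i => (i, i + 1))
  invFun p := if p.1 = p.2 then Sum.inl p.1 else Sum.inr p.1
  left_inv := by decide
  right_inv := by decide

lemma reindex_gen2_eq_fromBlocks (γ a1 a2 a3 : ℝ) :
    reindex parityEquiv.symm parityEquiv.symm (gen2 γ a1 a2 a3)
      = fromBlocks
          !![-(γ * (a1 + a2) : ℂ), γ * (a1 + a2);
             γ * (a1 + a2), -(γ * (a1 + a2))]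
          0 0
          !![-(γ * (a1 + a2 + 2 * a3) : ℂ), γ * (a1 - a2);
             γ * (a1 - a2), -(γ * (a1 + a2 + 2 * a3))] := by
  ext (i | i) (j | j) <;> fin_cases i <;> fin_cases j <;>
    simp [parityEquiv, gen2, pauli1, pauli2, pauli3, one_apply] <;> ring

theorem gen2_charpoly (γ a1 a2 a3 : ℝ) :
    (gen2 γ a1 a2 a3).charpoly
        = X * (X + C ((2 * γ * (a1 + a2) : ℝ) : ℂ)) * (X + C ((2 * γ * (a1 + a3) : ℝ) : ℂ))
            * (X + C ((2 * γ * (a2 + a3) : ℝ) : ℂ)) ∧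
      (gen2 γ a1 a2 a3).charpoly.roots
        = {0, ((-(2 * γ * (a1 + a2)) : ℝ) : ℂ), ((-(2 * γ * (a1 + a3)) : ℝ) : ℂ),
            ((-(2 * γ * (a2 + a3)) : ℝ) : ℂ)} := by
  have hcharpoly : (gen2 γ a1 a2 a3).charpoly
      = X * (X + C ((2 * γ * (a1 + a2) : ℝ) : ℂ)) * (X + C ((2 * γ * (a1 + a3) : ℝ) : ℂ))
          * (X + C ((2 * γ * (a2 + a3) : ℝ) : ℂ)) := by
    rw [← charpoly_reindex parityEquiv.symm, reindex_gen2_eq_fromBlocks,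
      charpoly_fromBlocks_zero₁₂, charpoly_of_fin_two_symm, charpoly_of_fin_two_symm]
    push_cast
    simp only [map_add, map_sub, map_mul, map_neg, map_ofNat]
    ring
  refine ⟨hcharpoly, ?_⟩
  rw [hcharpoly, roots_X_mul_X_add_C_mul_X_add_C_mul_X_add_C]
  simp only [ofReal_neg]

end
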